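/- arXiv:2506.21455 — 2 statements merged into one kernel-verified Lean document; each statement's English description precedes it below -/
import Mathlib

section
/- Let X ∈ ℂ^{n×n} be invertible with polar decomposition X = UP where U is unitary and P is Hermitian positive definite. Then for every unitary matrix Z, ‖X - U‖_F ≤ ‖X - Z‖_F. -/
open Matrix ComplexOrder

noncomputable def frobNorm {n : ℕ} (A : Matrix (Fin n) (Fin n) ℂ) : ℝ :=
  Real.sqrt ((Matrix.trace (Aᴴ * A)).re)

/-!
For unitary `Z`, `‖X - Z‖_F² = ‖X‖_F² - 2 Re tr (Zᴴ X) + n`, so the nearest unitary maximises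
`Re tr (Zᴴ X) = Re tr (W P)` with `W = Zᴴ U` unitary. For any unitary `W` and `P ≥ 0` one has
`Re tr (W P) ≤ tr P`, and `W = 1`, i.e. `Z = U`, attains this bound.
-/

namespace Matrix

variable {𝕜 m : Type*} [RCLike 𝕜] [Fintype m]

lemma IsHermitian.re_trace_conjTranspose_mul {P : Matrix m m 𝕜} (hP : P.IsHermitian)
    (W : Matrix m m 𝕜) : RCLike.re (Wᴴ * P).trace = RCLike.re (W * P).trace := by
  rw [← RCLike.conj_re, ← RCLike.star_def, ← trace_conjTranspose, conjTranspose_mul,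
    conjTranspose_conjTranspose, hP.eq, trace_mul_comm]

variable [DecidableEq m]

lemma re_trace_sub_conjTranspose_mul_sub {X Z : Matrix m m 𝕜} (hZ : Zᴴ * Z = 1) :
    RCLike.re ((X - Z)ᴴ * (X - Z)).trace
      = RCLike.re (Xᴴ * X).trace - 2 * RCLike.re (Zᴴ * X).trace + Fintype.card m := by
  have hexp : (X - Z)ᴴ * (X - Z) = Xᴴ * X - (Zᴴ * X)ᴴ - Zᴴ * X + Zᴴ * Z := by
    simp only [conjTranspose_sub, conjTranspose_mul, conjTranspose_conjTranspose, sub_mul,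
      mul_sub]
    abel
  rw [hexp, hZ, trace_add, trace_sub, trace_sub, trace_conjTranspose, trace_one]
  simp only [map_add, map_sub, RCLike.star_def, RCLike.conj_re, RCLike.natCast_re]
  ring

open scoped MatrixOrder in
/-- Writing `P = Bᴴ B`, `2 (Re tr P - Re tr (W P)) = ‖(1 - W) Bᴴ‖_F² ≥ 0`. -/
lemma PosSemidef.re_trace_mul_le_of_unitary {P W : Matrix m m 𝕜} (hP : P.PosSemidef)
    (hW : Wᴴ * W = 1) : RCLike.re (W * P).trace ≤ RCLike.re P.trace := by
  obtain ⟨B, hB⟩ := CStarAlgebra.nonneg_iff_eq_star_mul_self.mp hP.nonneg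
  set C := (1 - W) * Bᴴ
  have hC : 0 ≤ RCLike.re (Cᴴ * C).trace :=
    (RCLike.nonneg_iff.mp (posSemidef_conjTranspose_mul_self C).trace_nonneg).1
  have hsq : (1 - W)ᴴ * (1 - W) = (1 - W) + (1 - Wᴴ) := by
    rw [conjTranspose_sub, conjTranspose_one, sub_mul, mul_sub, mul_sub, one_mul, one_mul,
      mul_one, hW]
    abel
  have hgram : (Cᴴ * C).trace = ((1 - W + (1 - Wᴴ)) * P).trace := by
    have hCC : Cᴴ * C = B * ((1 - W)ᴴ * (1 - W)) * Bᴴ := by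
      simp only [C, conjTranspose_mul, conjTranspose_conjTranspose, Matrix.mul_assoc]
    rw [hCC, trace_mul_cycle, trace_mul_comm (Bᴴ * B), hsq, hB, star_eq_conjTranspose]
  rw [hgram, add_mul, sub_mul, sub_mul, one_mul, trace_add, trace_sub, trace_sub, map_add,
    map_sub, map_sub, hP.isHermitian.re_trace_conjTranspose_mul] at hC
  linarith

end Matrix

theorem stmt_7_general {n : ℕ} (X U P : Matrix (Fin n) (Fin n) ℂ)
    (hU : Uᴴ * U = 1) (hP : P.PosDef)
    (hpolar : X = U * P) :
    ∀ Z : Matrix (Fin n) (Fin n) ℂ, Zᴴ * Z = 1 →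
      frobNorm (X - U) ≤ frobNorm (X - Z) := by
  intro Z hZ
  have hZU : (Zᴴ * U)ᴴ * (Zᴴ * U) = 1 :=
    mem_unitaryGroup_iff'.mp <|
      mul_mem (Unitary.star_mem (mem_unitaryGroup_iff'.mpr hZ)) (mem_unitaryGroup_iff'.mpr hU)
  have hUX : Uᴴ * X = P := by rw [hpolar, ← Matrix.mul_assoc, hU, Matrix.one_mul]
  have hkey : (Zᴴ * X).trace.re ≤ (Uᴴ * X).trace.re := by
    rw [hUX, hpolar, ← Matrix.mul_assoc]
    exact hP.posSemidef.re_trace_mul_le_of_unitary hZU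
  have hexpU := re_trace_sub_conjTranspose_mul_sub (X := X) hU
  have hexpZ := re_trace_sub_conjTranspose_mul_sub (X := X) hZ
  simp only [RCLike.re_to_complex] at hexpU hexpZ
  unfold frobNorm
  apply Real.sqrt_le_sqrt
  linarith

theorem stmt_7 {n : ℕ} (X U P : Matrix (Fin n) (Fin n) ℂ)
    (hXinv : IsUnit X) (hU : Uᴴ * U = 1) (hP : P.PosDef)
    (hpolar : X = U * P) :
    ∀ Z : Matrix (Fin n) (Fin n) ℂ, Zᴴ * Z = 1 →
      frobNorm (X - U) ≤ frobNorm (X - Z) :=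
  stmt_7_general X U P hU hP hpolar
end

section
/- Let ρ and σ be Hermitian positive definite, U, W unitary with W·P = 2σUρ for some Hermitian positive definite P (i.e., W is the unitary polar factor of 2σUρ). Then ‖σ - WρW*‖_F² ≤ ‖σ - UρU*‖_F². -/
/-! Write `⟪X, Y⟫ := re tr(σ X ρ Yᴴ)`, a positive semidefinite sesquilinear form. For unitary `V`
the objective is `‖σ‖² + ‖ρ‖² - 2 ⟪V, V⟫`, so it suffices to show `⟪U, U⟫ ≤ ⟪W, W⟫`. The polar
relation gives `2 ⟪U, U⟫ = re tr(W P Uᴴ) ≤ tr P = 2 ⟪U, W⟫`. Both this middle bound and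
`2 ⟪U, W⟫ ≤ ⟪U, U⟫ + ⟪W, W⟫` are instances of `2 re tr(A X B Yᴴ) ≤ re tr(A X B Xᴴ) + re tr(A Y B Yᴴ)`
for positive semidefinite `A`, `B` (take `A = 1`, `B = P`, resp. `A = σ`, `B = ρ`), which is
`0 ≤ re tr(A (X - Y) B (X - Y)ᴴ)`. -/

open Matrix ComplexOrder

noncomputable def frobSq {n : ℕ} (A : Matrix (Fin n) (Fin n) ℂ) : ℝ :=
  (Matrix.trace (Aᴴ * A)).re

namespace Matrix

variable {n 𝕜 : Type*} [Fintype n] [DecidableEq n] [RCLike 𝕜]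

theorem PosSemidef.trace_mul_nonneg {A B : Matrix n n 𝕜} (hA : A.PosSemidef)
    (hB : B.PosSemidef) : 0 ≤ (A * B).trace := by
  open MatrixOrder in
  obtain ⟨S, rfl⟩ := CStarAlgebra.nonneg_iff_eq_star_mul_self.mp hA.nonneg
  rw [star_eq_conjTranspose, Matrix.mul_assoc, trace_mul_comm]
  exact (hB.mul_mul_conjTranspose_same S).trace_nonneg

theorem PosSemidef.two_mul_re_trace_le {A B : Matrix n n 𝕜} (hA : A.PosSemidef)
    (hB : B.PosSemidef) (X Y : Matrix n n 𝕜) :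
    2 * RCLike.re (A * X * B * Yᴴ).trace ≤
      RCLike.re (A * X * B * Xᴴ).trace + RCLike.re (A * Y * B * Yᴴ).trace := by
  have hsq : 0 ≤ RCLike.re (A * ((X - Y) * B * (X - Y)ᴴ)).trace :=
    (RCLike.nonneg_iff.mp (hA.trace_mul_nonneg (hB.mul_mul_conjTranspose_same (X - Y)))).1
  have hswap : RCLike.re (A * Y * B * Xᴴ).trace = RCLike.re (A * X * B * Yᴴ).trace := by
    rw [← RCLike.conj_re, ← RCLike.star_def, ← trace_conjTranspose]
    simp only [conjTranspose_mul, conjTranspose_conjTranspose, hA.isHermitian.eq,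
      hB.isHermitian.eq, Matrix.mul_assoc]
    rw [trace_mul_cycle', Matrix.mul_assoc, trace_mul_comm Yᴴ]
    simp only [Matrix.mul_assoc]
  simp only [conjTranspose_sub, sub_mul, mul_sub, Matrix.mul_assoc, trace_sub, map_sub] at hsq
  simp only [Matrix.mul_assoc] at hswap ⊢
  linarith

theorem PosSemidef.re_trace_mul_conjTranspose_le {P V W : Matrix n n 𝕜}
    (hP : P.PosSemidef) (hV : Vᴴ * V = 1) (hW : Wᴴ * W = 1) :
    RCLike.re (W * P * Vᴴ).trace ≤ RCLike.re P.trace := by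
  have h := PosSemidef.one.two_mul_re_trace_le hP W V
  simp only [Matrix.one_mul] at h
  rw [trace_mul_cycle W P Wᴴ, hW, Matrix.one_mul, trace_mul_cycle V P Vᴴ, hV, Matrix.one_mul] at h
  linarith

end Matrix

theorem frobSq_sub {n : ℕ} (A B : Matrix (Fin n) (Fin n) ℂ) :
    frobSq (A - B) = frobSq A + frobSq B - 2 * (Aᴴ * B).trace.re := by
  have hswap : (Bᴴ * A).trace.re = (Aᴴ * B).trace.re := by
    rw [← Complex.conj_re, ← Complex.star_def, ← trace_conjTranspose, conjTranspose_mul,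
      conjTranspose_conjTranspose]
  simp only [frobSq, conjTranspose_sub, sub_mul, mul_sub, trace_sub, Complex.sub_re, hswap]
  ring

theorem frobSq_mul_mul_conjTranspose {n : ℕ} {V : Matrix (Fin n) (Fin n) ℂ} (hV : Vᴴ * V = 1)
    (A : Matrix (Fin n) (Fin n) ℂ) : frobSq (V * A * Vᴴ) = frobSq A := by
  have h : (V * A * Vᴴ)ᴴ * (V * A * Vᴴ) = V * (Aᴴ * A) * Vᴴ := by
    simp only [conjTranspose_mul, conjTranspose_conjTranspose, Matrix.mul_assoc]
    rw [← Matrix.mul_assoc Vᴴ V, hV, Matrix.one_mul]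
  rw [frobSq, frobSq, h, trace_mul_cycle, hV, Matrix.one_mul]

theorem stmt_19_general {n : ℕ} (ρ σ U W P : Matrix (Fin n) (Fin n) ℂ)
    (hρ : ρ.PosDef) (hσ : σ.PosDef)
    (hU : Uᴴ * U = 1) (hW : Wᴴ * W = 1)
    (hP : P.PosDef) (hWP : W * P = (2 : ℂ) • (σ * U * ρ)) :
    frobSq (σ - W * ρ * Wᴴ) ≤ frobSq (σ - U * ρ * Uᴴ) := by
  have hpolar : 2 * (σ * U * ρ * Uᴴ).trace.re ≤ 2 * (σ * U * ρ * Wᴴ).trace.re := calc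
    2 * (σ * U * ρ * Uᴴ).trace.re = (W * P * Uᴴ).trace.re := by
      rw [hWP, smul_mul, trace_smul]; simp
    _ ≤ P.trace.re := hP.posSemidef.re_trace_mul_conjTranspose_le hU hW
    _ = (Wᴴ * (W * P)).trace.re := by rw [← Matrix.mul_assoc, hW, Matrix.one_mul]
    _ = 2 * (σ * U * ρ * Wᴴ).trace.re := by
      rw [hWP, Matrix.mul_smul, trace_smul, trace_mul_comm]; simp
  have hcross := hσ.posSemidef.two_mul_re_trace_le hρ.posSemidef U W
  simp only [RCLike.re_to_complex] at hcross
  rw [frobSq_sub, frobSq_sub, frobSq_mul_mul_conjTranspose hW, frobSq_mul_mul_conjTranspose hU,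
    hσ.isHermitian.eq]
  simp only [← Matrix.mul_assoc]
  linarith

theorem stmt_19 {n : ℕ} (ρ σ U W P : Matrix (Fin n) (Fin n) ℂ)
    (hρ : ρ.PosDef) (hσ : σ.PosDef)
    (hU : Uᴴ * U = 1) (hU' : U * Uᴴ = 1)
    (hW : Wᴴ * W = 1) (hW' : W * Wᴴ = 1)
    (hP : P.PosDef) (hWP : W * P = (2 : ℂ) • (σ * U * ρ)) :
    frobSq (σ - W * ρ * Wᴴ) ≤ frobSq (σ - U * ρ * Uᴴ) :=
  stmt_19_general ρ σ U W P hρ hσ hU hW hP hWP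
end
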